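/- arXiv:1905.08786 — 6 statements merged into one kernel-verified Lean document; each statement's English description precedes it below -/
import Mathlib

section
/- Let p : Fin N → ℝ be a probability vector with p i ∈ (0,1) and ∑ p i = 1, and define q i = p i (1 - p i) / Z where Z = ∑ i, p i (1 - p i). Then the Shannon entropy of q is greater than or equal to the Shannon entropy of p, i.e., -∑ i, q i · log (q i) ≥ -∑ i, p i · log (p i). -/
theorem proposal_entropy_ge (N : ℕ) (p : Fin N → ℝ)
    (hp : ∀ i, p i ∈ Set.Ioo (0:ℝ) 1) (hsum : ∑ i, p i = 1)
    (q : Fin N → ℝ)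
    (hq : ∀ i, q i = p i * (1 - p i) / (∑ j, p j * (1 - p j))) :
    -∑ i, p i * Real.log (p i) ≤ -∑ i, q i * Real.log (q i) := by
  classical
  have hp0 : ∀ i, 0 < p i := fun i => (hp i).1
  have hp1 : ∀ i, p i < 1 := fun i => (hp i).2
  have hφpos : ∀ i, 0 < p i * (1 - p i) := fun i =>
    mul_pos (hp0 i) (by linarith [hp1 i])
  -- N is positive
  have hN : N ≠ 0 := by rintro rfl; simp at hsum
  have : Nonempty (Fin N) := Fin.pos_iff_nonempty.mp (Nat.pos_of_ne_zero hN)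
  set Z : ℝ := ∑ j, p j * (1 - p j) with hZdef
  have hZpos : 0 < Z :=
    Finset.sum_pos (fun i _ => hφpos i) Finset.univ_nonempty
  have hqpos : ∀ i, 0 < q i := by
    intro i; rw [hq i]; exact div_pos (hφpos i) hZpos
  have hqsum : ∑ i, q i = 1 := by
    have : ∑ i, q i = (∑ i, p i * (1 - p i)) / Z := by
      rw [Finset.sum_div]; exact Finset.sum_congr rfl fun i _ => hq i
    rw [this]; exact div_self hZpos.ne'
  set g : Fin N → ℝ := fun i => Real.log (p i * (1 - p i)) with hgdef
  -- pairwise monotonicity: (p i - p j) and (g i - g j) have the same sign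
  have hpairsum : ∀ i j : Fin N, i ≠ j → p i + p j ≤ 1 := by
    intro i j hij
    have hsub : ({i, j} : Finset (Fin N)) ⊆ Finset.univ := Finset.subset_univ _
    have := Finset.sum_le_sum_of_subset_of_nonneg hsub
      (fun k _ _ => (hp0 k).le)
    rw [Finset.sum_pair hij, hsum] at this
    exact this
  have hpair : ∀ i j : Fin N,
      0 ≤ p i * p j * ((p i - p j) * (g i - g j)) := by
    intro i j
    by_cases hij : i = j
    · subst hij; simp
    · have hle : p i + p j ≤ 1 := hpairsum i j hij
      rcases le_total (p i) (p j) with h | h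
      · have hφ : p i * (1 - p i) ≤ p j * (1 - p j) := by nlinarith
        have hg : g i ≤ g j := Real.log_le_log (hφpos i) hφ
        have h0 : 0 ≤ (p j - p i) * (g j - g i) :=
          mul_nonneg (by linarith) (by linarith)
        have he : (p i - p j) * (g i - g j) = (p j - p i) * (g j - g i) := by ring
        exact mul_nonneg (mul_nonneg (hp0 i).le (hp0 j).le) (he ▸ h0)
      · have hφ : p j * (1 - p j) ≤ p i * (1 - p i) := by nlinarith
        have hg : g j ≤ g i := Real.log_le_log (hφpos j) hφ
        have : 0 ≤ (p i - p j) * (g i - g j) :=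
          mul_nonneg (by linarith) (by linarith)
        exact mul_nonneg (mul_nonneg (hp0 i).le (hp0 j).le) this
  -- the symmetrized double sum is nonnegative
  have h1 : 0 ≤ ∑ i, ∑ j, p i * p j * ((p i - p j) * (g i - g j)) :=
    Finset.sum_nonneg fun i _ => Finset.sum_nonneg fun j _ => hpair i j
  -- relate to the unsymmetrized double sum
  have hc : ∑ i, ∑ j, p i * p j * ((p i - p j) * g j)
      = ∑ i, ∑ j, -(p i * p j * ((p i - p j) * g i)) := by
    rw [Finset.sum_comm]
    exact Finset.sum_congr rfl fun i _ => Finset.sum_congr rfl fun j _ => by ring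
  have h2 : ∑ i, ∑ j, p i * p j * ((p i - p j) * (g i - g j))
      = 2 * ∑ i, ∑ j, p i * p j * ((p i - p j) * g i) := by
    have hsplit : ∀ i : Fin N, ∑ j, p i * p j * ((p i - p j) * (g i - g j))
        = (∑ j, p i * p j * ((p i - p j) * g i))
          - ∑ j, p i * p j * ((p i - p j) * g j) := by
      intro i
      rw [← Finset.sum_sub_distrib]
      exact Finset.sum_congr rfl fun j _ => by ring
    calc ∑ i, ∑ j, p i * p j * ((p i - p j) * (g i - g j))
        = (∑ i, ∑ j, p i * p j * ((p i - p j) * g i))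
          - ∑ i, ∑ j, p i * p j * ((p i - p j) * g j) := by
          rw [← Finset.sum_sub_distrib]
          exact Finset.sum_congr rfl fun i _ => hsplit i
      _ = (∑ i, ∑ j, p i * p j * ((p i - p j) * g i))
          - ∑ i, ∑ j, -(p i * p j * ((p i - p j) * g i)) := by rw [hc]
      _ = 2 * ∑ i, ∑ j, p i * p j * ((p i - p j) * g i) := by
          simp only [Finset.sum_neg_distrib]
          ring
  have hS1 : 0 ≤ ∑ i, ∑ j, p i * p j * ((p i - p j) * g i) := by linarith
  -- rewrite the inner sums
  have hinner : ∀ i : Fin N, ∑ j, p i * p j * ((p i - p j) * g i)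
      = Z * ((p i - q i) * g i) := by
    intro i
    have e1 : ∑ j, p i * p j * ((p i - p j) * g i)
        = p i * g i * ∑ j, (p i * p j - p j * p j) := by
      rw [Finset.mul_sum]
      exact Finset.sum_congr rfl fun j _ => by ring
    have e1' : ∑ j, (p i * p j - p j * p j)
        = p i - ∑ j, p j * p j := by
      rw [Finset.sum_sub_distrib, ← Finset.mul_sum, hsum, mul_one]
    have e2 : Z = 1 - ∑ j, p j * p j := by
      rw [hZdef, Finset.sum_congr rfl fun j (_ : j ∈ Finset.univ) =>
        (by ring : p j * (1 - p j) = p j - p j * p j), Finset.sum_sub_distrib, hsum]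
    have e3 : Z * q i = p i * (1 - p i) := by
      rw [hq i]; field_simp
    rw [e1, e1']
    have : Z * ((p i - q i) * g i) = (Z * p i - Z * q i) * g i := by ring
    rw [this, e3, e2]; ring
  have hcovsum : 0 ≤ ∑ i, (p i - q i) * g i := by
    have : ∑ i, ∑ j, p i * p j * ((p i - p j) * g i)
        = Z * ∑ i, (p i - q i) * g i := by
      rw [Finset.mul_sum]
      exact Finset.sum_congr rfl fun i _ => hinner i
    rw [this] at hS1
    exact le_of_mul_le_mul_left (by simpa using hS1) hZpos
  -- step 2 : ∑ q log q ≤ ∑ p log q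
  have hlogq : ∀ i, Real.log (q i) = g i - Real.log Z := by
    intro i
    rw [hq i, Real.log_div (hφpos i).ne' hZpos.ne']
  have step2 : ∑ i, q i * Real.log (q i) ≤ ∑ i, p i * Real.log (q i) := by
    have hdiff : ∑ i, p i * Real.log (q i) - ∑ i, q i * Real.log (q i)
        = ∑ i, (p i - q i) * g i := by
      rw [← Finset.sum_sub_distrib]
      have : ∀ i : Fin N, p i * Real.log (q i) - q i * Real.log (q i)
          = (p i - q i) * g i - (p i - q i) * Real.log Z := by
        intro i; rw [hlogq i]; ring
      rw [Finset.sum_congr rfl fun i _ => this i, Finset.sum_sub_distrib,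
        ← Finset.sum_mul, Finset.sum_sub_distrib, hsum, hqsum]
      ring
    linarith [hcovsum, hdiff]
  -- step 1 : ∑ p log q ≤ ∑ p log p  (Gibbs)
  have step1 : ∑ i, p i * Real.log (q i) ≤ ∑ i, p i * Real.log (p i) := by
    have key : ∀ i : Fin N, p i * Real.log (q i) ≤ p i * Real.log (p i) + (q i - p i) := by
      intro i
      have hlog : Real.log (q i / p i) ≤ q i / p i - 1 :=
        Real.log_le_sub_one_of_pos (div_pos (hqpos i) (hp0 i))
      have hlogd : Real.log (q i / p i) = Real.log (q i) - Real.log (p i) :=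
        Real.log_div (hqpos i).ne' (hp0 i).ne'
      rw [hlogd] at hlog
      have := mul_le_mul_of_nonneg_left hlog (hp0 i).le
      have hd : p i * (q i / p i - 1) = q i - p i := by
        rw [mul_sub, mul_one, mul_div_cancel₀ _ (hp0 i).ne']
      rw [hd] at this
      nlinarith
    calc ∑ i, p i * Real.log (q i)
        ≤ ∑ i, (p i * Real.log (p i) + (q i - p i)) :=
          Finset.sum_le_sum fun i _ => key i
      _ = ∑ i, p i * Real.log (p i) + (∑ i, q i - ∑ i, p i) := by
          rw [Finset.sum_add_distrib, Finset.sum_sub_distrib]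
      _ = ∑ i, p i * Real.log (p i) := by rw [hsum, hqsum]; ring
  have : ∑ i, q i * Real.log (q i) ≤ ∑ i, p i * Real.log (p i) :=
    le_trans step2 step1
  linarith
end

section
/- Let p : Fin N → ℝ with p i ∈ (0,1), ∑ p i = 1, sorted in decreasing order, Z = ∑ i, p i (1-p i), and q i = p i (1 - p i)/Z. Then for every k, ∑_{i≤k} q i ≤ ∑_{i≤k} p i, i.e., p majorizes q. -/
theorem p_majorizes_q (N : ℕ) (p : Fin N → ℝ)
    (hp : ∀ i, p i ∈ Set.Ioo (0:ℝ) 1) (hsum : ∑ i, p i = 1)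
    (hsorted : ∀ i j : Fin N, i ≤ j → p j ≤ p i)
    (q : Fin N → ℝ)
    (hq : ∀ i, q i = p i * (1 - p i) / (∑ j, p j * (1 - p j))) :
    ∀ k : Fin N,
      (∑ i ∈ Finset.univ.filter (fun i => i ≤ k), q i) ≤
      (∑ i ∈ Finset.univ.filter (fun i => i ≤ k), p i) := by
  intro k
  set Z := ∑ j, p j * (1 - p j) with hZdef
  have hZpos : 0 < Z := by
    apply Finset.sum_pos
    · intro i _
      nlinarith [(hp i).1, (hp i).2]
    · exact ⟨k, Finset.mem_univ k⟩
  have hqsum : ∑ i ∈ Finset.univ.filter (fun i => i ≤ k), q i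
      = (∑ i ∈ Finset.univ.filter (fun i => i ≤ k), p i * (1 - p i)) / Z := by
    rw [Finset.sum_div]; exact Finset.sum_congr rfl fun i _ => hq i
  rw [hqsum, div_le_iff₀ hZpos]
  set A := Finset.univ.filter (fun i : Fin N => i ≤ k) with hA
  set B := Finset.univ.filter (fun i : Fin N => ¬ i ≤ k) with hB
  have hsplit : ∑ i ∈ A, p i * (1 - p i) + ∑ i ∈ B, p i * (1 - p i) = Z :=
    Finset.sum_filter_add_sum_filter_not _ _ _
  have hsplit2 : ∑ i ∈ A, p i + ∑ i ∈ B, p i = 1 := by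
    rw [Finset.sum_filter_add_sum_filter_not]; exact hsum
  have key : (∑ j ∈ B, p j) * (∑ i ∈ A, p i * (1 - p i))
      ≤ (∑ i ∈ A, p i) * (∑ j ∈ B, p j * (1 - p j)) := by
    rw [Finset.sum_mul_sum, Finset.sum_mul_sum, Finset.sum_comm]
    apply Finset.sum_le_sum
    intro i hi
    apply Finset.sum_le_sum
    intro j hj
    have hik : i ≤ k := (Finset.mem_filter.mp hi).2
    have hkj : ¬ j ≤ k := (Finset.mem_filter.mp hj).2
    have hij : i ≤ j := le_trans hik (le_of_not_ge hkj)
    have hpij : p j ≤ p i := hsorted i j hij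
    nlinarith [mul_nonneg (mul_nonneg (hp i).1.le (hp j).1.le) (sub_nonneg.mpr hpij)]
  rw [← hsplit]
  have hexp : (∑ i ∈ A, p i * (1 - p i))
      = (∑ i ∈ A, p i * (1 - p i)) * (∑ i ∈ A, p i)
        + (∑ i ∈ A, p i * (1 - p i)) * (∑ i ∈ B, p i) := by
    rw [← mul_add, hsplit2, mul_one]
  nlinarith [key, hexp]
end

section
/- Let p be a probability vector on Fin N with entries in (0,1) and q i = p i (1 - p i)/Z. Then ∑ i, q i · log (p i) ≤ ∑ i, p i · log (p i). -/
theorem cross_entropy_comparison (N : ℕ) (p : Fin N → ℝ)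
    (hp : ∀ i, p i ∈ Set.Ioo (0:ℝ) 1) (hsum : ∑ i, p i = 1)
    (q : Fin N → ℝ)
    (hq : ∀ i, q i = p i * (1 - p i) / (∑ j, p j * (1 - p j))) :
    ∑ i, q i * Real.log (p i) ≤ ∑ i, p i * Real.log (p i) := by
  classical
  set A := ∑ i, p i * p i * Real.log (p i) with hA
  set S := ∑ i, p i * p i with hS
  set B := ∑ i, p i * Real.log (p i) with hB
  have hNpos : 0 < N := by
    by_contra h
    push_neg at h
    have hN0 : N = 0 := by omega
    subst hN0
    simp at hsum
  have hN : (Finset.univ : Finset (Fin N)).Nonempty := ⟨⟨0, hNpos⟩, Finset.mem_univ _⟩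
  have hZeq : (∑ j, p j * (1 - p j)) = 1 - S := by
    simp only [mul_sub, mul_one, Finset.sum_sub_distrib, hsum, hS]
  have hZpos : 0 < (∑ j, p j * (1 - p j)) :=
    Finset.sum_pos (fun i _ => mul_pos (hp i).1 (by linarith [(hp i).2])) hN
  have key : 0 ≤ ∑ i, ∑ j, p i * p j * ((p i - p j) * (Real.log (p i) - Real.log (p j))) := by
    apply Finset.sum_nonneg; intro i _
    apply Finset.sum_nonneg; intro j _
    apply mul_nonneg (mul_nonneg (hp i).1.le (hp j).1.le)
    rcases le_total (p i) (p j) with h | h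
    · have := Real.log_le_log (hp i).1 h
      nlinarith
    · have := Real.log_le_log (hp j).1 h
      exact mul_nonneg (by linarith) (by linarith)
  have expand : ∑ i, ∑ j, p i * p j * ((p i - p j) * (Real.log (p i) - Real.log (p j)))
      = 2 * (A - S * B) := by
    have inner : ∀ i : Fin N,
        ∑ j, p i * p j * ((p i - p j) * (Real.log (p i) - Real.log (p j)))
        = p i * p i * Real.log (p i) - p i * p i * B - p i * Real.log (p i) * S + p i * A := by
      intro i
      have : ∀ j : Fin N, p i * p j * ((p i - p j) * (Real.log (p i) - Real.log (p j)))
          = (p i * p i * Real.log (p i)) * p j - (p i * p i) * (p j * Real.log (p j))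
            - (p i * Real.log (p i)) * (p j * p j) + p i * (p j * p j * Real.log (p j)) := by
        intro j; ring
      rw [Finset.sum_congr rfl (fun j _ => this j)]
      simp only [Finset.sum_add_distrib, Finset.sum_sub_distrib, ← Finset.mul_sum, hsum]
      ring
    rw [Finset.sum_congr rfl (fun i _ => inner i)]
    simp only [Finset.sum_add_distrib, Finset.sum_sub_distrib, ← Finset.sum_mul, ← hA, ← hS, ← hB,
      hsum]
    ring
  have hkey : S * B ≤ A := by nlinarith [key, expand]
  have hqsum : ∑ i, q i * Real.log (p i) = (B - A) / (∑ j, p j * (1 - p j)) := by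
    have h1 : ∀ i : Fin N, q i * Real.log (p i)
        = (p i * (1 - p i) * Real.log (p i)) / (∑ j, p j * (1 - p j)) := by
      intro i; rw [hq i]; ring
    rw [Finset.sum_congr rfl (fun i _ => h1 i), ← Finset.sum_div]
    congr 1
    rw [hB, hA, ← Finset.sum_sub_distrib]
    apply Finset.sum_congr rfl
    intro i _
    ring
  rw [hqsum, div_le_iff₀ hZpos, hZeq]
  nlinarith [hkey]
end

section
/- If p and q are probability vectors on Fin N, both sorted in decreasing order, and p majorizes q, and g : ℝ → ℝ is concave, then ∑ i, g (q i) ≥ ∑ i, g (p i) (Karamata's inequality for concave functions). -/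
open Finset

/-- Supergradient of a concave function at `x`: sup of slopes to the right. -/
noncomputable def karamataSG (g : ℝ → ℝ) (x : ℝ) : ℝ :=
  sSup ((fun y => (g y - g x) / (y - x)) '' Set.Ioi x)

lemma karamata_slope3 {g : ℝ → ℝ} (hg : ConcaveOn ℝ Set.univ g) {x y z : ℝ}
    (hxy : x < y) (hyz : y < z) :
    (g z - g y) / (z - y) ≤ (g y - g x) / (y - x) :=
  hg.slope_anti_adjacent (Set.mem_univ x) (Set.mem_univ z) hxy hyz

lemma karamataSG_bddAbove {g : ℝ → ℝ} (hg : ConcaveOn ℝ Set.univ g) (x : ℝ) :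
    BddAbove ((fun y => (g y - g x) / (y - x)) '' Set.Ioi x) := by
  refine ⟨(g x - g (x - 1)) / (x - (x - 1)), ?_⟩
  rintro s ⟨y, hy, rfl⟩
  exact karamata_slope3 hg (by linarith) hy

lemma karamataSG_nonempty (g : ℝ → ℝ) (x : ℝ) :
    ((fun y => (g y - g x) / (y - x)) '' Set.Ioi x).Nonempty :=
  ⟨_, ⟨x + 1, by simp, rfl⟩⟩

/-- Supergradient inequality. -/
lemma karamataSG_superg {g : ℝ → ℝ} (hg : ConcaveOn ℝ Set.univ g) (x y : ℝ) :
    g y ≤ g x + karamataSG g x * (y - x) := by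
  rcases lt_trichotomy x y with h | h | h
  · have h1 : (g y - g x) / (y - x) ≤ karamataSG g x :=
      le_csSup (karamataSG_bddAbove hg x) ⟨y, h, rfl⟩
    have h2 : 0 < y - x := by linarith
    rw [div_le_iff₀ h2] at h1
    linarith
  · simp [h]
  · have h1 : karamataSG g x ≤ (g x - g y) / (x - y) := by
      apply csSup_le (karamataSG_nonempty g x)
      rintro s ⟨z, hz, rfl⟩
      exact karamata_slope3 hg h hz
    have h2 : 0 < x - y := by linarith
    rw [le_div_iff₀ h2] at h1
    nlinarith
lemma karamataSG_anti {g : ℝ → ℝ} (hg : ConcaveOn ℝ Set.univ g) {x y : ℝ} (hxy : x ≤ y) :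
    karamataSG g y ≤ karamataSG g x := by
  rcases eq_or_lt_of_le hxy with rfl | h
  · exact le_refl _
  · apply csSup_le (karamataSG_nonempty g y)
    rintro s ⟨z, hz, rfl⟩
    calc (g z - g y) / (z - y) ≤ (g y - g x) / (y - x) := karamata_slope3 hg h hz
      _ ≤ karamataSG g x := le_csSup (karamataSG_bddAbove hg x) ⟨y, h, rfl⟩

theorem karamata_concave (N : ℕ) (p q : Fin N → ℝ) (g : ℝ → ℝ)
    (hp : ∀ i, 0 ≤ p i) (hq : ∀ i, 0 ≤ q i)
    (hpsum : ∑ i, p i = 1) (hqsum : ∑ i, q i = 1)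
    (hpsorted : ∀ i j : Fin N, i ≤ j → p j ≤ p i)
    (hqsorted : ∀ i j : Fin N, i ≤ j → q j ≤ q i)
    (hmaj : ∀ k : Fin N,
      (∑ i ∈ Finset.univ.filter (fun i => i ≤ k), q i) ≤
      (∑ i ∈ Finset.univ.filter (fun i => i ≤ k), p i))
    (hg : ConcaveOn ℝ Set.univ g) :
    ∑ i, g (p i) ≤ ∑ i, g (q i) := by
  rcases Nat.eq_zero_or_pos N with rfl | hN
  · simp at hpsum
  set P : ℕ → ℝ := fun n => if h : n < N then p ⟨n, h⟩ else 0 with hP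
  set Q : ℕ → ℝ := fun n => if h : n < N then q ⟨n, h⟩ else 0 with hQ
  set D : ℕ → ℝ := fun n => P n - Q n with hD
  set σ : ℕ → ℝ := fun n => karamataSG g (Q n) with hσ
  have hPval : ∀ i : Fin N, P i = p i := fun i => by simp [hP, i.isLt]
  have hQval : ∀ i : Fin N, Q i = q i := fun i => by simp [hQ, i.isLt]
  -- partial sums
  have hGNfull : ∀ (f : Fin N → ℝ) (F : ℕ → ℝ), (∀ i : Fin N, F i = f i) →
      ∑ i ∈ range N, F i = ∑ i, f i := by
    intro f F hF
    rw [← Fin.sum_univ_eq_sum_range]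
    exact Finset.sum_congr rfl fun i _ => hF i
  -- partial sum nonneg
  have hpart : ∀ k, k < N → 0 ≤ ∑ i ∈ range (k + 1), D i := by
    intro k hk
    have key : ∀ (f : Fin N → ℝ) (F : ℕ → ℝ), (∀ i : Fin N, F i = f i) →
        ∑ i ∈ range (k + 1), F i
          = ∑ i ∈ univ.filter (fun i => i ≤ (⟨k, hk⟩ : Fin N)), f i := by
      intro f F hF
      set G : ℕ → ℝ := fun n =>
        if h : n < N then (if (⟨n, h⟩ : Fin N) ≤ (⟨k, hk⟩ : Fin N) then f ⟨n, h⟩ else 0) else 0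
        with hG
      have hsub : range (k + 1) ⊆ range N := Finset.range_subset_range.2 hk
      have step1 : ∑ i ∈ range (k + 1), F i = ∑ i ∈ range (k + 1), G i := by
        apply Finset.sum_congr rfl
        intro i hi
        have hik : i ≤ k := Nat.lt_succ_iff.1 (mem_range.1 hi)
        have hiN : i < N := lt_of_le_of_lt hik hk
        simp [hG, hiN, hik, hF ⟨i, hiN⟩]
      have step2 : ∑ i ∈ range (k + 1), G i = ∑ i ∈ range N, G i := by
        apply Finset.sum_subset hsub
        intro i hiN hik
        have h1 : i < N := mem_range.1 hiN
        have h2 : ¬ i ≤ k := fun h => hik (mem_range.2 (Nat.lt_succ_of_le h))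
        simp [hG, h1, h2]
      have step3 : ∑ i ∈ range N, G i
          = ∑ a : Fin N, if a ≤ (⟨k, hk⟩ : Fin N) then f a else 0 := by
        rw [← Fin.sum_univ_eq_sum_range G N]
        apply Finset.sum_congr rfl
        intro a _
        simp [hG, a.isLt, Fin.le_def]
      rw [Finset.sum_filter, step1, step2, step3]
    have h1 := key p P hPval
    have h2 := key q Q hQval
    have := hmaj ⟨k, hk⟩
    simp only [hD, Finset.sum_sub_distrib, h1, h2]
    linarith
  -- total sum zero
  have htot : ∑ i ∈ range N, D i = 0 := by
    simp only [hD, Finset.sum_sub_distrib, hGNfull p P hPval, hGNfull q Q hQval, hpsum, hqsum]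
    ring
  -- supergradient bound
  have hbound : ∑ i, g (p i) - ∑ i, g (q i) ≤ ∑ i ∈ range N, σ i * D i := by
    rw [← hGNfull (fun i => g (p i)) (fun n => g (P n)) (fun i => by simp [hPval]),
        ← hGNfull (fun i => g (q i)) (fun n => g (Q n)) (fun i => by simp [hQval]),
        ← Finset.sum_sub_distrib]
    apply Finset.sum_le_sum
    intro i _
    have := karamataSG_superg hg (Q i) (P i)
    simp only [hσ, hD]
    linarith
  -- Abel summation
  have habel : ∑ i ∈ range N, σ i * D i =
      σ (N - 1) * (∑ i ∈ range N, D i)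
        - ∑ i ∈ range (N - 1), (σ (i + 1) - σ i) * (∑ j ∈ range (i + 1), D j) := by
    simpa [smul_eq_mul] using Finset.sum_range_by_parts σ D N
  have hneg : ∑ i ∈ range N, σ i * D i ≤ 0 := by
    rw [habel, htot, mul_zero, zero_sub, neg_nonpos]
    apply Finset.sum_nonneg
    intro i hi
    have hiN : i < N - 1 := mem_range.1 hi
    have hi1 : i + 1 < N := by omega
    have hiN' : i < N := by omega
    have hmono : σ i ≤ σ (i + 1) := by
      apply karamataSG_anti hg
      have := hqsorted ⟨i, hiN'⟩ ⟨i + 1, hi1⟩ (by simp [Fin.mk_le_mk])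
      simp only [hQ]
      simpa [hiN', hi1] using this
    exact mul_nonneg (by linarith) (hpart i hiN')
  linarith
end

section
/- Let p : Fin N → ℝ be a probability vector with entries in (0,1) and define φ(p) i = p i (1 - p i)/(∑ j p j (1 - p j)). Then iterating φ, the entropy sequence H(φ^n(p)) is nondecreasing in n. -/
open Finset

lemma pair_lemma {x y : ℝ} (hx : x ∈ Set.Ioo (0:ℝ) 1) (hy : y ∈ Set.Ioo (0:ℝ) 1)
    (hxy : x + y ≤ 1) :
    0 ≤ (x - y) * (Real.log (x * (1 - x)) - Real.log (y * (1 - y))) := by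
  obtain ⟨hx0, hx1⟩ := hx
  obtain ⟨hy0, hy1⟩ := hy
  rcases le_total y x with h | h
  · apply mul_nonneg (by linarith)
    have : y * (1 - y) ≤ x * (1 - x) := by nlinarith
    have := Real.log_le_log (by nlinarith) this
    linarith
  · have h1 : x - y ≤ 0 := by linarith
    have : x * (1 - x) ≤ y * (1 - y) := by nlinarith
    have h2 := Real.log_le_log (by nlinarith) this
    have h3 : Real.log (x * (1 - x)) - Real.log (y * (1 - y)) ≤ 0 := by linarith
    nlinarith [mul_nonneg (neg_nonneg.mpr h1) (neg_nonneg.mpr h3)]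

lemma step_lemma (N : ℕ) (v w : Fin N → ℝ)
    (hv : ∀ i, v i ∈ Set.Ioo (0:ℝ) 1) (hs : ∑ i, v i = 1)
    (hw : ∀ i, w i = v i * (1 - v i) / (∑ j, v j * (1 - v j))) :
    (∀ i, w i ∈ Set.Ioo (0:ℝ) 1) ∧ (∑ i, w i = 1) ∧
    -∑ i, v i * Real.log (v i) ≤ -∑ i, w i * Real.log (w i) := by
  set S : ℝ := ∑ j, v j * (1 - v j) with hSdef
  have hv0 : ∀ i, 0 < v i := fun i => (hv i).1
  have hv1 : ∀ i, v i < 1 := fun i => (hv i).2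
  have hne : (univ : Finset (Fin N)).Nonempty := by
    rcases (univ : Finset (Fin N)).eq_empty_or_nonempty with h | h
    · rw [h] at hs; simp at hs
    · exact h
  have hterm : ∀ i : Fin N, 0 < v i * (1 - v i) := fun i =>
    mul_pos (hv0 i) (by linarith [hv1 i])
  have hS : 0 < S := Finset.sum_pos (fun i _ => hterm i) hne
  -- w entries in (0,1)
  have hwpos : ∀ i, 0 < w i := by
    intro i; rw [hw i]; exact div_pos (hterm i) hS
  have hwlt : ∀ i, v i * (1 - v i) < S := by
    intro i
    have hsplit : v i * (1 - v i) + ∑ j ∈ univ.erase i, v j * (1 - v j) = S := by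
      rw [hSdef]; exact Finset.add_sum_erase _ (fun j => v j * (1 - v j)) (mem_univ i)
    have hvsplit : v i + ∑ j ∈ univ.erase i, v j = 1 := by
      rw [Finset.add_sum_erase _ _ (mem_univ i), hs]
    have hne' : (univ.erase i).Nonempty := by
      rcases (univ.erase i).eq_empty_or_nonempty with h | h
      · rw [h] at hvsplit; simp at hvsplit; linarith [hv1 i]
      · exact h
    have : 0 < ∑ j ∈ univ.erase i, v j * (1 - v j) :=
      Finset.sum_pos (fun j _ => hterm j) hne'
    linarith
  have hwIoo : ∀ i, w i ∈ Set.Ioo (0:ℝ) 1 := by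
    intro i
    refine ⟨hwpos i, ?_⟩
    rw [hw i]
    exact (div_lt_one hS).mpr (hwlt i)
  have hsumw : ∑ i, w i = 1 := by
    have : ∑ i, w i = (∑ i, v i * (1 - v i)) / S := by
      rw [Finset.sum_div]; exact Finset.sum_congr rfl fun i _ => hw i
    rw [this, ← hSdef, div_self hS.ne']
  refine ⟨hwIoo, hsumw, ?_⟩
  -- abbreviations
  set h : Fin N → ℝ := fun i => Real.log (v i * (1 - v i)) with hhdef
  set T : ℝ := ∑ j, v j * v j with hTdef
  set A : ℝ := ∑ i, v i * v i * h i with hAdef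
  set B : ℝ := ∑ i, v i * h i with hBdef
  have hST : S + T = 1 := by
    have e : ∀ i : Fin N, v i * (1 - v i) + v i * v i = v i := fun i => by ring
    rw [hSdef, hTdef, ← Finset.sum_add_distrib, Finset.sum_congr rfl (fun i _ => e i), hs]
  have logw : ∀ i, Real.log (w i) = h i - Real.log S := by
    intro i; rw [hw i, Real.log_div (hterm i).ne' hS.ne']
  -- Chebyshev-type inequality: T * B ≤ A
  have hTBA : T * B ≤ A := by
    have hDpos : 0 ≤ ∑ i, ∑ j, v i * v j * ((v i - v j) * (h i - h j)) := by
      apply Finset.sum_nonneg; intro i _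
      apply Finset.sum_nonneg; intro j _
      rcases eq_or_ne i j with rfl | hij
      · simp
      · apply mul_nonneg (mul_pos (hv0 i) (hv0 j)).le
        apply pair_lemma (hv i) (hv j)
        have : ∑ x ∈ ({i, j} : Finset (Fin N)), v x ≤ ∑ x, v x :=
          Finset.sum_le_sum_of_subset_of_nonneg (subset_univ _)
            (fun k _ _ => (hv0 k).le)
        rw [Finset.sum_pair hij] at this
        linarith [hs]
    have inner : ∀ i, ∑ j, v i * v j * ((v i - v j) * (h i - h j)) =
        (v i * v i * h i) * (∑ j, v j) - (v i * v i) * (∑ j, v j * h j)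
        - (v i * h i) * (∑ j, v j * v j) + v i * (∑ j, v j * v j * h j) := by
      intro i
      rw [Finset.mul_sum, Finset.mul_sum, Finset.mul_sum, Finset.mul_sum,
        ← Finset.sum_sub_distrib, ← Finset.sum_sub_distrib, ← Finset.sum_add_distrib]
      exact Finset.sum_congr rfl fun j _ => by ring
    have hD : ∑ i, ∑ j, v i * v j * ((v i - v j) * (h i - h j))
        = 2 * A - 2 * (T * B) := by
      calc ∑ i, ∑ j, v i * v j * ((v i - v j) * (h i - h j))
          = ∑ i, ((v i * v i * h i) * (∑ j, v j) - (v i * v i) * (∑ j, v j * h j)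
            - (v i * h i) * (∑ j, v j * v j) + v i * (∑ j, v j * v j * h j)) :=
            Finset.sum_congr rfl fun i _ => inner i
        _ = A * (∑ j, v j) - T * (∑ j, v j * h j) - B * (∑ j, v j * v j)
            + (∑ i, v i) * (∑ j, v j * v j * h j) := by
            rw [Finset.sum_add_distrib, Finset.sum_sub_distrib, Finset.sum_sub_distrib,
              ← Finset.sum_mul, ← Finset.sum_mul, ← Finset.sum_mul, ← Finset.sum_mul]
        _ = 2 * A - 2 * (T * B) := by
            rw [hs, ← hTdef, ← hAdef, ← hBdef]; ring
    rw [hD] at hDpos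
    linarith
  -- Step A : ∑ w log w ≤ ∑ v log w
  have vw : ∀ i, v i - w i = v i * (v i - T) / S := by
    intro i
    rw [hw i]
    rw [eq_div_iff hS.ne', sub_mul, div_mul_cancel₀ _ hS.ne']
    linear_combination (v i) * hST
  have stepA : ∑ i, w i * Real.log (w i) ≤ ∑ i, v i * Real.log (w i) := by
    have key : 0 ≤ ∑ i, (v i - w i) * Real.log (w i) := by
      have e1 : ∑ i, (v i - w i) * Real.log (w i)
          = ∑ i, (v i - w i) * h i - Real.log S * (∑ i, (v i - w i)) := by
        rw [Finset.mul_sum, ← Finset.sum_sub_distrib]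
        exact Finset.sum_congr rfl fun i _ => by rw [logw i]; ring
      have e2 : ∑ i, (v i - w i) = 0 := by
        rw [Finset.sum_sub_distrib, hs, hsumw]; ring
      have e3 : ∑ i, (v i - w i) * h i = (A - T * B) / S := by
        have e4 : ∑ i, (v i - w i) * h i
            = (∑ i, (v i * v i * h i - T * (v i * h i))) / S := by
          rw [Finset.sum_div]
          exact Finset.sum_congr rfl fun i _ => by rw [vw i]; ring
        rw [e4, Finset.sum_sub_distrib, ← Finset.mul_sum, ← hAdef, ← hBdef]
      rw [e1, e2, e3, mul_zero, sub_zero]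
      exact div_nonneg (by linarith) hS.le
    have : ∑ i, (v i - w i) * Real.log (w i)
        = ∑ i, v i * Real.log (w i) - ∑ i, w i * Real.log (w i) := by
      rw [← Finset.sum_sub_distrib]
      exact Finset.sum_congr rfl fun i _ => by ring
    linarith [this ▸ key]
  -- Step B : Gibbs
  have stepB : ∑ i, v i * Real.log (w i) ≤ ∑ i, v i * Real.log (v i) := by
    have : ∑ i, (v i * Real.log (w i) - v i * Real.log (v i)) ≤ ∑ i, (w i - v i) := by
      apply Finset.sum_le_sum
      intro i _
      have hlog : Real.log (w i / v i) ≤ w i / v i - 1 :=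
        Real.log_le_sub_one_of_pos (div_pos (hwpos i) (hv0 i))
      rw [Real.log_div (hwpos i).ne' (hv0 i).ne'] at hlog
      have := mul_le_mul_of_nonneg_left hlog (hv0 i).le
      have e : v i * (w i / v i - 1) = w i - v i := by
        rw [mul_sub, mul_div_cancel₀ _ (hv0 i).ne', mul_one]
      rw [e] at this
      linarith [this, mul_sub (v i) (Real.log (w i)) (Real.log (v i))]
    rw [Finset.sum_sub_distrib, Finset.sum_sub_distrib, hs, hsumw] at this
    linarith
  linarith

theorem iterated_entropy_monotone (N : ℕ) (p : Fin N → ℝ)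
    (hp : ∀ i, p i ∈ Set.Ioo (0:ℝ) 1) (hsum : ∑ i, p i = 1)
    (φ : (Fin N → ℝ) → (Fin N → ℝ))
    (hφ : ∀ v : Fin N → ℝ, ∀ i, φ v i = v i * (1 - v i) / (∑ j, v j * (1 - v j))) :
    ∀ n : ℕ,
      -∑ i, (φ^[n] p) i * Real.log ((φ^[n] p) i) ≤
      -∑ i, (φ^[n+1] p) i * Real.log ((φ^[n+1] p) i) := by
  have key : ∀ n, (∀ i, (φ^[n] p) i ∈ Set.Ioo (0:ℝ) 1) ∧ (∑ i, (φ^[n] p) i = 1) := by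
    intro n
    induction n with
    | zero => exact ⟨hp, hsum⟩
    | succ n ih =>
      have hstep := step_lemma N (φ^[n] p) (φ^[n+1] p) ih.1 ih.2
        (fun i => by rw [Function.iterate_succ_apply']; exact hφ _ i)
      exact ⟨hstep.1, hstep.2.1⟩
  intro n
  exact (step_lemma N (φ^[n] p) (φ^[n+1] p) (key n).1 (key n).2
    (fun i => by rw [Function.iterate_succ_apply']; exact hφ _ i)).2.2
end

section
/- Let p be a probability vector on Fin N with entries in (0,1), N ≥ 2, and q i = p i (1 - p i)/Z with Z = ∑ p i (1 - p i). Then the entropy gap satisfies H(q) - H(p) = 0 if and only if p is the uniform distribution. -/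
theorem entropy_gap_zero_iff_uniform (N : ℕ) (hN : 2 ≤ N) (p : Fin N → ℝ)
    (hp : ∀ i, p i ∈ Set.Ioo (0:ℝ) 1) (hsum : ∑ i, p i = 1)
    (q : Fin N → ℝ)
    (hq : ∀ i, q i = p i * (1 - p i) / (∑ j, p j * (1 - p j))) :
    (-∑ i, q i * Real.log (q i)) - (-∑ i, p i * Real.log (p i)) = 0 ↔
      ∀ i, p i = 1 / N := by
  have hNpos : (0:ℝ) < N := by
    have : 0 < N := by omega
    exact_mod_cast this
  set Z := ∑ j, p j * (1 - p j) with hZ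
  have hpos : ∀ i, 0 < p i * (1 - p i) := fun i =>
    mul_pos (hp i).1 (by linarith [(hp i).2])
  have hZpos : 0 < Z := Finset.sum_pos (fun i _ => hpos i)
    ⟨⟨0, by omega⟩, Finset.mem_univ _⟩
  have hqpos : ∀ i, 0 < q i := fun i => by rw [hq i]; exact div_pos (hpos i) hZpos
  have hqsum : ∑ i, q i = 1 := by
    rw [Finset.sum_congr rfl (fun i _ => hq i), ← Finset.sum_div]
    exact div_self (ne_of_gt hZpos)
  have hqZ : ∀ i, Z * q i = p i * (1 - p i) := fun i => by
    rw [hq i]; field_simp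
  constructor
  · -- forward: gap = 0 → uniform
    intro hG
    set D := ∑ i, p i * (Real.log (p i) - Real.log (q i)) with hD
    set C := ∑ i, (p i - q i) * Real.log (q i) with hC
    have hGDC : D + C = 0 := by
      rw [hD, hC, ← Finset.sum_add_distrib]
      rw [neg_sub_neg, ← Finset.sum_sub_distrib] at hG
      rw [← hG]
      exact Finset.sum_congr rfl (fun i _ => by ring)
    -- D term bound
    have hDterm : ∀ i, p i - q i ≤ p i * (Real.log (p i) - Real.log (q i)) := by
      intro i
      have h1 : Real.log (q i / p i) ≤ q i / p i - 1 :=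
        Real.log_le_sub_one_of_pos (div_pos (hqpos i) (hp i).1)
      rw [Real.log_div (ne_of_gt (hqpos i)) (ne_of_gt (hp i).1)] at h1
      have h2 := mul_le_mul_of_nonneg_left h1 (hp i).1.le
      have h3 : p i * (q i / p i - 1) = q i - p i := by
        field_simp [(hp i).1.ne']
      rw [h3] at h2
      nlinarith
    have hDnonneg : 0 ≤ D := by
      have h0 : 0 ≤ ∑ i, (p i * (Real.log (p i) - Real.log (q i)) - (p i - q i)) :=
        Finset.sum_nonneg (fun i _ => by linarith [hDterm i])
      rw [Finset.sum_sub_distrib, Finset.sum_sub_distrib, hsum, hqsum] at h0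
      simpa [hD] using h0
    -- C nonneg via Chebyshev double sum
    set c := ∑ j, p j * p j with hc
    have hZc : Z = 1 - c := by
      have e : ∑ j, p j * (1 - p j) = ∑ j, (p j - p j * p j) :=
        Finset.sum_congr rfl (fun j _ => by ring)
      rw [hZ, hc, e, Finset.sum_sub_distrib, hsum]
    have hkey : ∀ i, Z * (p i - q i) = p i * (p i - c) := by
      intro i
      have h := hqZ i
      linear_combination p i * hZc - h
    have hmono : ∀ i j, i ≠ j → p i ≤ p j → Real.log (q i) ≤ Real.log (q j) := by
      intro i j hij hle
      have hsum2 : p i + p j ≤ 1 := by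
        have h1 : ({i, j} : Finset (Fin N)) ⊆ Finset.univ := Finset.subset_univ _
        have h2 : ∑ k ∈ ({i, j} : Finset (Fin N)), p k = p i + p j :=
          Finset.sum_pair hij
        have h3 := Finset.sum_le_sum_of_subset_of_nonneg h1
          (fun k _ _ => (hp k).1.le)
        rw [h2, hsum] at h3
        exact h3
      have hqle : q i ≤ q j := by
        rw [hq i, hq j]
        apply div_le_div_of_nonneg_right _ hZpos.le
        nlinarith
      exact Real.log_le_log (hqpos i) hqle
    have hterm : ∀ i j, 0 ≤ p i * p j * (p i - p j) * (Real.log (q i) - Real.log (q j)) := by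
      intro i j
      rcases eq_or_ne i j with rfl | hij
      · simp
      rcases le_total (p i) (p j) with h | h
      · have hLle := hmono i j hij h
        have h2 : 0 ≤ (p i * p j) * ((p j - p i) * (Real.log (q j) - Real.log (q i))) :=
          mul_nonneg (mul_pos (hp i).1 (hp j).1).le
            (mul_nonneg (by linarith) (by linarith))
        calc (0:ℝ) ≤ (p i * p j) * ((p j - p i) * (Real.log (q j) - Real.log (q i))) := h2
          _ = p i * p j * (p i - p j) * (Real.log (q i) - Real.log (q j)) := by ring
      · have hLle := hmono j i (Ne.symm hij) h
        have h2 : 0 ≤ (p i * p j) * ((p i - p j) * (Real.log (q i) - Real.log (q j))) :=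
          mul_nonneg (mul_pos (hp i).1 (hp j).1).le
            (mul_nonneg (by linarith) (by linarith))
        calc (0:ℝ) ≤ (p i * p j) * ((p i - p j) * (Real.log (q i) - Real.log (q j))) := h2
          _ = p i * p j * (p i - p j) * (Real.log (q i) - Real.log (q j)) := by ring
    have hdouble : 0 ≤ ∑ i, ∑ j, p i * p j * (p i - p j) * (Real.log (q i) - Real.log (q j)) :=
      Finset.sum_nonneg fun i _ => Finset.sum_nonneg fun j _ => hterm i j
    have hinner : ∀ i : Fin N, ∑ j, p i * p j * (p i - p j) * Real.log (q i)
        = p i * (p i - c) * Real.log (q i) := by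
      intro i
      have h1 : ∑ j, p j * (p i - p j) = p i - c := by
        have e : ∑ j, p j * (p i - p j) = ∑ j, (p j * p i - p j * p j) :=
          Finset.sum_congr rfl (fun j _ => by ring)
        rw [e, Finset.sum_sub_distrib, ← Finset.sum_mul, hsum, one_mul, hc]
      calc ∑ j, p i * p j * (p i - p j) * Real.log (q i)
          = (∑ j, p j * (p i - p j)) * (p i * Real.log (q i)) := by
            rw [Finset.sum_mul]
            exact Finset.sum_congr rfl (fun j _ => by ring)
        _ = p i * (p i - c) * Real.log (q i) := by rw [h1]; ring
    have hsplit : ∑ i, ∑ j, p i * p j * (p i - p j) * (Real.log (q i) - Real.log (q j))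
        = 2 * ∑ i, p i * (p i - c) * Real.log (q i) := by
      have e1 : ∀ i : Fin N, ∑ j, p i * p j * (p i - p j) * (Real.log (q i) - Real.log (q j))
          = ∑ j, p i * p j * (p i - p j) * Real.log (q i)
            - ∑ j, p i * p j * (p i - p j) * Real.log (q j) := by
        intro i
        rw [← Finset.sum_sub_distrib]
        exact Finset.sum_congr rfl (fun j _ => by ring)
      rw [Finset.sum_congr rfl (fun i _ => e1 i), Finset.sum_sub_distrib]
      have e2 : ∑ i, ∑ j, p i * p j * (p i - p j) * Real.log (q j)
          = - ∑ i, ∑ j, p i * p j * (p i - p j) * Real.log (q i) := by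
        rw [Finset.sum_comm]
        rw [← Finset.sum_neg_distrib]
        refine Finset.sum_congr rfl (fun j _ => ?_)
        rw [← Finset.sum_neg_distrib]
        exact Finset.sum_congr rfl (fun i _ => by ring)
      rw [e2, Finset.sum_congr rfl (fun i _ => hinner i)]
      ring
    have hZC : Z * C = ∑ i, p i * (p i - c) * Real.log (q i) := by
      rw [hC, Finset.mul_sum]
      exact Finset.sum_congr rfl (fun i _ => by rw [← mul_assoc, hkey i])
    have hCnonneg : 0 ≤ C := by
      have h0 : 0 ≤ 2 * (Z * C) := by rw [hZC, ← hsplit]; exact hdouble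
      nlinarith
    -- so D = 0, hence q = p pointwise
    have hD0 : D = 0 := by linarith
    have hqp : ∀ i, q i = p i := by
      have h0 : ∑ i, (p i * (Real.log (p i) - Real.log (q i)) - (p i - q i)) = 0 := by
        rw [Finset.sum_sub_distrib, Finset.sum_sub_distrib, hsum, hqsum, ← hD, hD0]
        ring
      have h1 := (Finset.sum_eq_zero_iff_of_nonneg
        (fun i _ => by linarith [hDterm i])).mp h0
      intro i
      by_contra hne
      have hx : q i / p i ≠ 1 := fun h =>
        hne ((div_eq_one_iff_eq (hp i).1.ne').mp h)
      have h2 : Real.log (q i / p i) < q i / p i - 1 :=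
        Real.log_lt_sub_one_of_pos (div_pos (hqpos i) (hp i).1) hx
      rw [Real.log_div (ne_of_gt (hqpos i)) (ne_of_gt (hp i).1)] at h2
      have h3 := mul_lt_mul_of_pos_left h2 (hp i).1
      have h4 : p i * (q i / p i - 1) = q i - p i := by
        field_simp [(hp i).1.ne']
      rw [h4] at h3
      have h5 := h1 i (Finset.mem_univ i)
      nlinarith [h5, h3]
    -- q = p ⇒ p i = 1 - Z ⇒ p i = 1/N
    have hval : ∀ i, p i = 1 - Z := by
      intro i
      have h := hqZ i
      rw [hqp i] at h
      have h2 : p i * Z = p i * (1 - p i) := by linear_combination h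
      have h3 := mul_left_cancel₀ (hp i).1.ne' h2
      linarith
    intro i
    have hsumZ : (N : ℝ) * (1 - Z) = 1 := by
      calc (N:ℝ) * (1 - Z) = ∑ _i : Fin N, (1 - Z) := by
            rw [Finset.sum_const, Finset.card_univ, Fintype.card_fin, nsmul_eq_mul]
        _ = ∑ i, p i := Finset.sum_congr rfl (fun i _ => (hval i).symm)
        _ = 1 := hsum
    rw [hval i]
    field_simp
    linarith
  · -- reverse: uniform → gap = 0
    intro hu
    have hN2 : (2:ℝ) ≤ N := by exact_mod_cast hN
    have hNhalf : (1:ℝ) / N ≤ 1 / 2 :=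
      one_div_le_one_div_of_le (by norm_num) hN2
    have hZval : Z = 1 - 1 / N := by
      have e : ∑ j, p j * (1 - p j) = ∑ _j : Fin N, ((1:ℝ)/N * (1 - 1/N)) :=
        Finset.sum_congr rfl (fun j _ => by rw [hu j])
      rw [hZ, e, Finset.sum_const, Finset.card_univ, Fintype.card_fin,
        nsmul_eq_mul]
      field_simp
    have hqp : ∀ i, q i = p i := by
      intro i
      rw [hq i, hZval, hu i]
      have h1 : (1:ℝ) - 1 / N ≠ 0 := ne_of_gt (by linarith)
      rw [mul_div_assoc, div_self h1, mul_one]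
    have : ∑ i, q i * Real.log (q i) = ∑ i, p i * Real.log (p i) :=
      Finset.sum_congr rfl (fun i _ => by rw [hqp i])
    rw [this]
    ring
end
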